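/- arXiv:2106.00103 — 3 statements merged into one kernel-verified Lean document; each statement's English description precedes it below -/
import Mathlib

section
/- With J as in the representer theorem, writing h = Σ_j w_j Γ_j, the vector of optimal coefficients w ∈ ℝ^M satisfies (G·G + λG) w = G b, where G is the Gram matrix G_{ij} = ⟨Γ_i, Γ_j⟩_H; in particular, any w solving (G + λI) w = b yields a minimizer of J. -/
open scoped RealInnerProductSpace Matrix

/-!
Expanding the objective along a line gives the exact identity
`J (h + t • v) = J h + 2 t D(h, v) + t² Q(v)` with `Q(v) = Σⱼ ⟪v, Γⱼ⟫² + λ‖v‖² ≥ 0`.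
A minimizer therefore has vanishing first variation `D(h, ·)` (the quadratic in `t` has a
nonpositive discriminant), and conversely a critical point is a minimizer. At
`h = Σᵢ wᵢ Γᵢ` the first variation is `D(h, v) = Σⱼ ((G + λI) w - b)ⱼ ⟪v, Γⱼ⟫`: testing it
against `v = Γᵢ` gives `G ((G + λI) w - b) = 0`, and it vanishes identically when
`(G + λI) w = b`.
-/

namespace Tikhonov

variable {H : Type*} [NormedAddCommGroup H] [InnerProductSpace ℝ H] {ι : Type*} [Fintype ι]
  (Γ : ι → H) (b : ι → ℝ) (lam : ℝ)

def objective (h : H) : ℝ := ∑ j, (⟪h, Γ j⟫ - b j) ^ 2 + lam * ‖h‖ ^ 2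

def firstVariation (h v : H) : ℝ := ∑ j, (⟪h, Γ j⟫ - b j) * ⟪v, Γ j⟫ + lam * ⟪h, v⟫

def secondVariation (v : H) : ℝ := ∑ j, ⟪v, Γ j⟫ ^ 2 + lam * ‖v‖ ^ 2

variable {Γ b lam}

theorem secondVariation_nonneg (hlam : 0 ≤ lam) (v : H) : 0 ≤ secondVariation Γ lam v := by
  unfold secondVariation
  positivity

theorem objective_add_smul (h v : H) (t : ℝ) :
    objective Γ b lam (h + t • v) =
      objective Γ b lam h + 2 * t * firstVariation Γ b lam h v
        + t ^ 2 * secondVariation Γ lam v := by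
  have hres (j : ι) : (⟪h + t • v, Γ j⟫ - b j) ^ 2 =
      (⟪h, Γ j⟫ - b j) ^ 2 + 2 * t * ((⟪h, Γ j⟫ - b j) * ⟪v, Γ j⟫) + t ^ 2 * ⟪v, Γ j⟫ ^ 2 := by
    rw [inner_add_left, real_inner_smul_left]
    ring
  have hnorm : ‖h + t • v‖ ^ 2 = ‖h‖ ^ 2 + 2 * t * ⟪h, v⟫ + t ^ 2 * ‖v‖ ^ 2 := by
    rw [norm_add_sq_real, real_inner_smul_right, norm_smul, mul_pow, Real.norm_eq_abs, sq_abs]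
    ring
  simp only [objective, firstVariation, secondVariation, hres, hnorm, Finset.sum_add_distrib,
    ← Finset.mul_sum]
  ring

theorem firstVariation_eq_zero_of_forall_le {h : H}
    (hmin : ∀ h', objective Γ b lam h ≤ objective Γ b lam h') (v : H) :
    firstVariation Γ b lam h v = 0 := by
  have hquad : ∀ t : ℝ,
      0 ≤ secondVariation Γ lam v * (t * t) + 2 * firstVariation Γ b lam h v * t + 0 := by
    intro t
    have := hmin (h + t • v)
    rw [objective_add_smul] at this
    nlinarith
  have := discrim_le_zero hquad
  rw [discrim] at this
  nlinarith [sq_nonneg (firstVariation Γ b lam h v)]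

theorem objective_le_of_firstVariation_eq_zero (hlam : 0 ≤ lam) {h : H}
    (hcrit : ∀ v, firstVariation Γ b lam h v = 0) (h' : H) :
    objective Γ b lam h ≤ objective Γ b lam h' := by
  have := objective_add_smul (Γ := Γ) (b := b) (lam := lam) h (h' - h) 1
  rw [one_smul, add_sub_cancel, hcrit] at this
  nlinarith [secondVariation_nonneg (Γ := Γ) hlam (h' - h)]

variable {G : Matrix ι ι ℝ}

theorem inner_sum_smul_eq_mulVec (hG : ∀ i j, G i j = ⟪Γ i, Γ j⟫) (w : ι → ℝ) (j : ι) :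
    ⟪∑ i, w i • Γ i, Γ j⟫ = (G *ᵥ w) j := by
  simp only [sum_inner, real_inner_smul_left, Matrix.mulVec, dotProduct, hG]
  exact Finset.sum_congr rfl fun i _ => by rw [real_inner_comm, mul_comm]

theorem firstVariation_sum_smul [DecidableEq ι] (hG : ∀ i j, G i j = ⟪Γ i, Γ j⟫) (w : ι → ℝ)
    (v : H) :
    firstVariation Γ b lam (∑ i, w i • Γ i) v =
      ∑ j, ((G + lam • (1 : Matrix ι ι ℝ)) *ᵥ w - b) j * ⟪v, Γ j⟫ := by
  have hpenalty : ⟪∑ i, w i • Γ i, v⟫ = ∑ j, w j * ⟪v, Γ j⟫ := by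
    rw [real_inner_comm, inner_sum]
    simp only [real_inner_smul_right]
  rw [firstVariation, hpenalty, Finset.mul_sum, ← Finset.sum_add_distrib]
  refine Finset.sum_congr rfl fun j _ => ?_
  simp only [inner_sum_smul_eq_mulVec hG, Matrix.add_mulVec, Matrix.smul_mulVec,
    Matrix.one_mulVec, Pi.sub_apply, Pi.add_apply, Pi.smul_apply, smul_eq_mul]
  ring

end Tikhonov

theorem stmt9_general (H : Type*) [NormedAddCommGroup H] [InnerProductSpace ℝ H]
    (M : ℕ) (Γ : Fin M → H) (lam : ℝ) (hlam : 0 < lam)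
    (b : Fin M → ℝ) (G : Matrix (Fin M) (Fin M) ℝ)
    (hG : ∀ i j, G i j = ⟪Γ i, Γ j⟫) :
    (∀ w : Fin M → ℝ,
      (∀ h : H, (∑ j, (⟪∑ i, w i • Γ i, Γ j⟫ - b j) ^ 2) + lam * ‖∑ i, w i • Γ i‖ ^ 2
          ≤ (∑ j, (⟪h, Γ j⟫ - b j) ^ 2) + lam * ‖h‖ ^ 2) →
      (G * G + lam • G).mulVec w = G.mulVec b) ∧
    (∀ w : Fin M → ℝ, (G + lam • (1 : Matrix (Fin M) (Fin M) ℝ)).mulVec w = b →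
      ∀ h : H, (∑ j, (⟪∑ i, w i • Γ i, Γ j⟫ - b j) ^ 2) + lam * ‖∑ i, w i • Γ i‖ ^ 2
          ≤ (∑ j, (⟪h, Γ j⟫ - b j) ^ 2) + lam * ‖h‖ ^ 2) := by
  constructor
  · intro w hmin
    have hnormal : G *ᵥ ((G + lam • (1 : Matrix (Fin M) (Fin M) ℝ)) *ᵥ w - b) = 0 := by
      ext i
      have := Tikhonov.firstVariation_eq_zero_of_forall_le hmin (Γ i)
      rw [Tikhonov.firstVariation_sum_smul hG] at this
      simpa [Matrix.mulVec, dotProduct, hG, mul_comm] using this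
    rwa [Matrix.mulVec_sub, Matrix.mulVec_mulVec, mul_add, Matrix.mul_smul, mul_one, sub_eq_zero]
      at hnormal
  · intro w hw
    refine Tikhonov.objective_le_of_firstVariation_eq_zero hlam.le fun v => ?_
    simp [Tikhonov.firstVariation_sum_smul hG, hw]

/-- Writing `h = Σⱼ wⱼ Γⱼ`, a minimizing coefficient vector `w` satisfies
`(G·G + λG) w = G b` for the Gram matrix `G`; in particular, any `w` solving
`(G + λI) w = b` yields a minimizer of `J`. -/
theorem stmt9 (H : Type*) [NormedAddCommGroup H] [InnerProductSpace ℝ H]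
    [CompleteSpace H] (M : ℕ) (Γ : Fin M → H) (lam : ℝ) (hlam : 0 < lam)
    (b : Fin M → ℝ) (G : Matrix (Fin M) (Fin M) ℝ)
    (hG : ∀ i j, G i j = ⟪Γ i, Γ j⟫) :
    (∀ w : Fin M → ℝ,
      (∀ h : H, (∑ j, (⟪∑ i, w i • Γ i, Γ j⟫ - b j) ^ 2) + lam * ‖∑ i, w i • Γ i‖ ^ 2
          ≤ (∑ j, (⟪h, Γ j⟫ - b j) ^ 2) + lam * ‖h‖ ^ 2) →
      (G * G + lam • G).mulVec w = G.mulVec b) ∧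
    (∀ w : Fin M → ℝ, (G + lam • (1 : Matrix (Fin M) (Fin M) ℝ)).mulVec w = b →
      ∀ h : H, (∑ j, (⟪∑ i, w i • Γ i, Γ j⟫ - b j) ^ 2) + lam * ‖∑ i, w i • Γ i‖ ^ 2
          ≤ (∑ j, (⟪h, Γ j⟫ - b j) ^ 2) + lam * ‖h‖ ^ 2) :=
  stmt9_general H M Γ lam hlam b G hG
end

section
/- Occupation kernels depend continuously on the signal: if θ_k → θ uniformly on [0,T] with all θ_k, θ continuous, and the kernel K of the RKHS H is continuous, then the order-s occupation kernels Γ_k of θ_k converge weakly in H to the occupation kernel Γ of θ; that is, ⟨h, Γ_k⟩ → ⟨h, Γ⟩ for every h ∈ H. -/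
open scoped RealInnerProductSpace
open Filter Topology Set Metric Interval

/-!
Eventually every `Θ i` takes values in the compact `1`-thickening of the image of `θ`, on which
a continuous function is uniformly continuous; hence the integrands converge uniformly on
`[0, T]`, and so do their integrals.
-/

section UniformComposition

variable {ι α E F : Type*} [PseudoMetricSpace α] [PseudoMetricSpace E] [UniformSpace F]
  {p : Filter ι} {K : Set α} {Θ : ι → α → E} {θ : α → E}

theorem TendstoUniformlyOn.prodMk_id (h : TendstoUniformlyOn Θ θ p K) :
    TendstoUniformlyOn (fun i x => (x, Θ i x)) (fun x => (x, θ x)) p K := by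
  rw [Metric.tendstoUniformlyOn_iff] at h ⊢
  intro ε hε
  filter_upwards [h ε hε] with i hi x hx
  simpa [Prod.dist_eq, hε.le] using hi x hx

theorem TendstoUniformlyOn.comp_continuous_of_isCompact [ProperSpace E] {g : α → E → F}
    (hg : Continuous (Function.uncurry g)) (hK : IsCompact K) (hθ : ContinuousOn θ K)
    (h : TendstoUniformlyOn Θ θ p K) :
    TendstoUniformlyOn (fun i x => g x (Θ i x)) (fun x => g x (θ x)) p K := by
  set S := K ×ˢ cthickening 1 (θ '' K)
  have hS : IsCompact S := hK.prod (hK.image_of_continuousOn hθ).cthickening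
  have hΘS : ∀ᶠ i in p, ∀ x ∈ K, (x, Θ i x) ∈ S := by
    filter_upwards [Metric.tendstoUniformlyOn_iff.mp h 1 one_pos] with i hi x hx
    exact ⟨hx, mem_cthickening_of_dist_le _ (θ x) 1 _ ⟨x, hx, rfl⟩ (by
      rw [dist_comm]; exact (hi x hx).le)⟩
  have hθS : ∀ x ∈ K, (x, θ x) ∈ S := fun x hx =>
    ⟨hx, self_subset_cthickening _ ⟨x, hx, rfl⟩⟩
  exact (hS.uniformContinuousOn_of_continuous hg.continuousOn).comp_tendstoUniformlyOn_eventually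
    hΘS hθS h.prodMk_id

end UniformComposition

theorem tendsto_intervalIntegral_comp_of_tendstoUniformlyOn {ι E F : Type*}
    [PseudoMetricSpace E] [ProperSpace E] [NormedAddCommGroup F] [NormedSpace ℝ F]
    {l : Filter ι} [l.IsCountablyGenerated] {a b : ℝ} {Θ : ι → ℝ → E} {θ : ℝ → E}
    {g : ℝ → E → F} (hg : Continuous (Function.uncurry g))
    (hΘ : ∀ i, ContinuousOn (Θ i) [[a, b]]) (hθ : ContinuousOn θ [[a, b]])
    (h : TendstoUniformlyOn Θ θ l [[a, b]]) :
    Tendsto (fun i => ∫ t in a..b, g t (Θ i t)) l (𝓝 (∫ t in a..b, g t (θ t))) :=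
  (h.comp_continuous_of_isCompact hg isCompact_uIcc hθ).tendsto_intervalIntegral_of_continuousOn
    (.of_forall fun i => hg.comp_continuousOn (continuousOn_id.prodMk (hΘ i)))

theorem stmt17_general (n : ℕ) (H : Type*) [NormedAddCommGroup H] [InnerProductSpace ℝ H]
    (φ : (Fin n → ℝ) → H) (hφ : Continuous φ)
    (s : ℕ) (T : ℝ) (hT : 0 < T)
    (θk : ℕ → ℝ → (Fin n → ℝ)) (θ : ℝ → (Fin n → ℝ))
    (hθk : ∀ k, Continuous (θk k)) (hθ : Continuous θ)
    (hunif : TendstoUniformlyOn θk θ Filter.atTop (Set.Icc 0 T))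
    (Γk : ℕ → H) (Γ : H)
    (hΓk : ∀ (k : ℕ) (h : H), ⟪h, Γk k⟫ = (1 / (Nat.factorial (s - 1) : ℝ)) *
        ∫ t in (0:ℝ)..T, (T - t) ^ (s - 1) * ⟪h, φ (θk k t)⟫)
    (hΓ : ∀ h : H, ⟪h, Γ⟫ = (1 / (Nat.factorial (s - 1) : ℝ)) *
        ∫ t in (0:ℝ)..T, (T - t) ^ (s - 1) * ⟪h, φ (θ t)⟫) :
    ∀ h : H, Filter.Tendsto (fun k => ⟪h, Γk k⟫) Filter.atTop (nhds ⟪h, Γ⟫) := by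
  intro h
  simp only [hΓk, hΓ h]
  rw [← uIcc_of_le hT.le] at hunif
  refine (tendsto_intervalIntegral_comp_of_tendstoUniformlyOn
    (g := fun t x => (T - t) ^ (s - 1) * ⟪h, φ x⟫) ?_ (fun k => (hθk k).continuousOn)
    hθ.continuousOn hunif).const_mul _
  exact ((continuous_const.sub continuous_fst).pow _).mul
    (continuous_const.inner (hφ.comp continuous_snd))

/-- Continuous dependence of occupation kernels on the signal: uniform convergence
`θₖ → θ` on `[0,T]` implies weak convergence `Γₖ ⇀ Γ` of the order-`s` occupation
kernels. -/
theorem stmt17 (n : ℕ) (H : Type*) [NormedAddCommGroup H] [InnerProductSpace ℝ H]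
    (φ : (Fin n → ℝ) → H) (hφ : Continuous φ)
    (s : ℕ) (hs : 1 ≤ s) (T : ℝ) (hT : 0 < T)
    (θk : ℕ → ℝ → (Fin n → ℝ)) (θ : ℝ → (Fin n → ℝ))
    (hθk : ∀ k, Continuous (θk k)) (hθ : Continuous θ)
    (hunif : TendstoUniformlyOn θk θ Filter.atTop (Set.Icc 0 T))
    (Γk : ℕ → H) (Γ : H)
    (hΓk : ∀ (k : ℕ) (h : H), ⟪h, Γk k⟫ = (1 / (Nat.factorial (s - 1) : ℝ)) *
        ∫ t in (0:ℝ)..T, (T - t) ^ (s - 1) * ⟪h, φ (θk k t)⟫)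
    (hΓ : ∀ h : H, ⟪h, Γ⟫ = (1 / (Nat.factorial (s - 1) : ℝ)) *
        ∫ t in (0:ℝ)..T, (T - t) ^ (s - 1) * ⟪h, φ (θ t)⟫) :
    ∀ h : H, Filter.Tendsto (fun k => ⟪h, Γk k⟫) Filter.atTop (nhds ⟪h, Γ⟫) :=
  stmt17_general n H φ hφ s T hT θk θ hθk hθ hunif Γk Γ hΓk hΓ
end

section
/- Let γ : [0,T] → ℝ be twice continuously differentiable with γ'' = f ∘ γ + (g ∘ γ)·u for continuous f, g : ℝ → ℝ and continuous u : [0,T] → ℝ, and suppose (f, g) lies in a vector-valued RKHS H of ℝ²-valued functions. Then ⟨(f,g), Γ^{(2)}_{γ,u}⟩_H = γ(T) − γ(0) − T γ'(0), where Γ^{(2)}_{γ,u} represents h ↦ ∫₀ᵀ (T−t)(h₁(γ(t)) + h₂(γ(t)) u(t)) dt. -/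
open scoped RealInnerProductSpace

/-! By the reproducing property and the ODE, `⟪F, Γ⟫ = ∫₀ᵀ (T - t) γ''(t) dt`, and one integration
by parts turns this into the first-order Taylor remainder `γ T - γ 0 - T γ'(0)`. -/

theorem ContDiff.integral_sub_smul_iteratedDeriv_two {E : Type*} [NormedAddCommGroup E]
    [NormedSpace ℝ E] [CompleteSpace E] {γ : ℝ → E} (hγ : ContDiff ℝ 2 γ) (a b : ℝ) :
    ∫ t in a..b, (b - t) • iteratedDeriv 2 γ t = γ b - γ a - (b - a) • deriv γ a := by
  have hγ' : ContDiff ℝ 1 (deriv γ) := (contDiff_succ_iff_deriv.mp hγ).2.2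
  have h₂ : iteratedDeriv 2 γ = deriv (deriv γ) := by
    rw [iteratedDeriv_succ, iteratedDeriv_one]
  have hdγ : ∀ t, HasDerivAt γ (deriv γ t) t :=
    fun t => (hγ.differentiable two_ne_zero t).hasDerivAt
  have hddγ : ∀ t, HasDerivAt (deriv γ) (iteratedDeriv 2 γ t) t :=
    fun t => h₂ ▸ (hγ'.differentiable one_ne_zero t).hasDerivAt
  have hparts := intervalIntegral.integral_smul_deriv_eq_deriv_smul
    (fun t _ => (hasDerivAt_id' t).const_sub b) (fun t _ => hddγ t)
    intervalIntegrable_const ((h₂ ▸ hγ'.continuous_deriv le_rfl).intervalIntegrable a b)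
  have hftc := intervalIntegral.integral_eq_sub_of_hasDerivAt (fun t _ => hdγ t)
    (hγ'.continuous.intervalIntegrable a b)
  simp only [neg_one_smul, intervalIntegral.integral_neg, hftc, sub_self, zero_smul] at hparts
  rw [hparts]
  abel

theorem stmt18_general (H : Type*) [NormedAddCommGroup H] [InnerProductSpace ℝ H]
    (ev : H →ₗ[ℝ] (ℝ → ℝ × ℝ))
    (f g : ℝ → ℝ)
    (u : ℝ → ℝ) (T : ℝ) (hT : 0 < T)
    (γ : ℝ → ℝ) (hγ : ContDiff ℝ 2 γ)
    (hode : ∀ t ∈ Set.Icc (0:ℝ) T, iteratedDeriv 2 γ t = f (γ t) + g (γ t) * u t)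
    (F : H) (hF : ∀ x : ℝ, ev F x = (f x, g x))
    (Γ : H)
    (hΓ : ∀ h : H, ⟪h, Γ⟫ =
      ∫ t in (0:ℝ)..T, (T - t) * ((ev h (γ t)).1 + (ev h (γ t)).2 * u t)) :
    ⟪F, Γ⟫ = γ T - γ 0 - T * deriv γ 0 := by
  have hintegrand : ∀ t ∈ Set.uIcc 0 T,
      (T - t) * ((ev F (γ t)).1 + (ev F (γ t)).2 * u t) = (T - t) • iteratedDeriv 2 γ t := by
    intro t ht
    rw [Set.uIcc_of_le hT.le] at ht
    rw [hF, hode t ht, smul_eq_mul]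
  rw [hΓ F, intervalIntegral.integral_congr hintegrand, hγ.integral_sub_smul_iteratedDeriv_two,
    sub_zero, smul_eq_mul]

/-- Second-order control occupation kernel identity: for `γ'' = f∘γ + (g∘γ)·u` with
`(f,g)` in a vector-valued RKHS `H` of `ℝ²`-valued functions (realized by the linear
inclusion `ev`), one has `⟨(f,g), Γ⁽²⁾_{γ,u}⟩ = γ(T) − γ(0) − T γ'(0)`. -/
theorem stmt18 (H : Type*) [NormedAddCommGroup H] [InnerProductSpace ℝ H]
    (ev : H →ₗ[ℝ] (ℝ → ℝ × ℝ))
    (f g : ℝ → ℝ) (hf : Continuous f) (hg : Continuous g)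
    (u : ℝ → ℝ) (hu : Continuous u) (T : ℝ) (hT : 0 < T)
    (γ : ℝ → ℝ) (hγ : ContDiff ℝ 2 γ)
    (hode : ∀ t ∈ Set.Icc (0:ℝ) T, iteratedDeriv 2 γ t = f (γ t) + g (γ t) * u t)
    (F : H) (hF : ∀ x : ℝ, ev F x = (f x, g x))
    (Γ : H)
    (hΓ : ∀ h : H, ⟪h, Γ⟫ =
      ∫ t in (0:ℝ)..T, (T - t) * ((ev h (γ t)).1 + (ev h (γ t)).2 * u t)) :
    ⟪F, Γ⟫ = γ T - γ 0 - T * deriv γ 0 :=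
  stmt18_general H ev f g u T hT γ hγ hode F hF Γ hΓ
end
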